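/- Let H be a finite simple graph of order n ≥ 2 and let k be an integer with 1 ≤ k ≤ C(K_1 + H). Then adim_k(K_1 + H) ≥ adim_k(H). -/

import Mathlib

open Finset

namespace AdjDim

noncomputable section
open Classical

variable {V W : Type*}

/-- Truncated distance `d_{G,2}(x,y) = min(d_G(x,y), 2)`:
`0` if `x = y`, `1` if `x` and `y` are adjacent, and `2` otherwise. -/
def d2 (G : SimpleGraph V) (x y : V) : ℕ :=
  if x = y then 0 else if G.Adj x y then 1 else 2

/-- `S` is a `k`-adjacency generator for `G`: every pair of distinct vertices is
distinguished (w.r.t. `d_{G,2}`) by at least `k` vertices of `S`. -/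
def IsKAdjGen (G : SimpleGraph V) [Fintype V] (k : ℕ) (S : Finset V) : Prop :=
  ∀ x y : V, x ≠ y → k ≤ (S.filter (fun w => d2 G x w ≠ d2 G y w)).card

/-- The `k`-adjacency dimension of `G`: the minimum cardinality of a
`k`-adjacency generator. -/
def adim (G : SimpleGraph V) [Fintype V] (k : ℕ) : ℕ :=
  sInf {n | ∃ S : Finset V, IsKAdjGen G k S ∧ S.card = n}

/-- `B` is a `k`-adjacency basis of `G`: a `k`-adjacency generator of minimum
cardinality. -/
def IsKAdjBasis (G : SimpleGraph V) [Fintype V] (k : ℕ) (B : Finset V) : Prop :=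
  IsKAdjGen G k B ∧ B.card = adim G k

/-- `G` is `k`-adjacency dimensional: `k` is the largest integer for which a
`k`-adjacency generator exists. -/
def IsKAdjDimensional (G : SimpleGraph V) [Fintype V] (k : ℕ) : Prop :=
  (∃ S : Finset V, IsKAdjGen G k S) ∧
    ∀ k' : ℕ, k < k' → ¬ ∃ S : Finset V, IsKAdjGen G k' S

/-- `C_G(x,y)`: the set of vertices distinguishing `x` and `y` w.r.t. `d_{G,2}`. -/
def CSet (G : SimpleGraph V) [Fintype V] (x y : V) : Finset V :=
  univ.filter (fun z => d2 G x z ≠ d2 G y z)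

/-- `C(G) = min_{x ≠ y} |C_G(x,y)|`. -/
def Cmin (G : SimpleGraph V) [Fintype V] : ℕ :=
  sInf {m | ∃ x y : V, x ≠ y ∧ (CSet G x y).card = m}

/-- `C_k(G)`: the union of the sets `C_G(x,y)` over pairs of distinct vertices
with `|C_G(x,y)| = k`. -/
def Ck (G : SimpleGraph V) [Fintype V] (k : ℕ) : Finset V :=
  univ.filter (fun z => ∃ x y : V, x ≠ y ∧ (CSet G x y).card = k ∧ z ∈ CSet G x y)

/-- Two distinct vertices `x, y` are twins: every other vertex is at the same
truncated distance from both. -/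
def Twins (G : SimpleGraph V) (x y : V) : Prop :=
  x ≠ y ∧ ∀ z : V, z ≠ x → z ≠ y → d2 G x z = d2 G y z

/-- The join `G + H` of two vertex-disjoint graphs. -/
def join (G : SimpleGraph V) (H : SimpleGraph W) : SimpleGraph (V ⊕ W) where
  Adj x y :=
    match x, y with
    | Sum.inl a, Sum.inl b => G.Adj a b
    | Sum.inr a, Sum.inr b => H.Adj a b
    | Sum.inl _, Sum.inr _ => True
    | Sum.inr _, Sum.inl _ => True
  symm := by
    refine ⟨?_⟩
    rintro (a | a) (b | b) h
    · exact G.adj_symm h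
    · trivial
    · trivial
    · exact H.adj_symm h
  loopless := by
    refine ⟨?_⟩
    rintro (a | a) h
    · exact G.irrefl h
    · exact H.irrefl h

/-- `K_1 + H`: the join of a one-vertex graph with `H`, i.e. `H` together with a
new universal vertex. -/
def K1join (H : SimpleGraph W) : SimpleGraph (Unit ⊕ W) :=
  join (⊥ : SimpleGraph Unit) H

/- Since `k ≤ C(K₁ + H)`, the whole vertex set is a `k`-adjacency generator of `K₁ + H`, so
`K₁ + H` has a `k`-adjacency basis `B`. The vertices of `B` lying in `H` form a `k`-adjacency
generator of `H`: the universal vertex is at truncated distance `1` from every vertex of `H`,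
so it distinguishes no two of them. Hence `adim_k(H) ≤ |B ∩ V(H)| ≤ |B|`. -/

lemma d2_K1join_inr_inr (H : SimpleGraph W) (x y : W) :
    d2 (K1join H) (Sum.inr x) (Sum.inr y) = d2 H x y := by
  simp only [d2, K1join, join, Sum.inr.injEq]
  congr

lemma d2_K1join_inr_inl (H : SimpleGraph W) (x : W) (u : Unit) :
    d2 (K1join H) (Sum.inr x) (Sum.inl u) = 1 := by
  simp [d2, K1join, join]

lemma isKAdjGen_univ_of_le_Cmin [Fintype V] {G : SimpleGraph V} {k : ℕ} (hk : k ≤ Cmin G) :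
    IsKAdjGen G k univ := fun x y hxy =>
  hk.trans (Nat.sInf_le ⟨x, y, hxy, rfl⟩)

lemma adim_le_card [Fintype V] {G : SimpleGraph V} {k : ℕ} {S : Finset V}
    (hS : IsKAdjGen G k S) : adim G k ≤ S.card :=
  Nat.sInf_le ⟨S, hS, rfl⟩

lemma exists_isKAdjBasis [Fintype V] {G : SimpleGraph V} {k : ℕ} {S : Finset V}
    (hS : IsKAdjGen G k S) : ∃ B, IsKAdjBasis G k B :=
  Nat.sInf_mem (⟨S.card, S, hS, rfl⟩ : {n | ∃ S, IsKAdjGen G k S ∧ S.card = n}.Nonempty)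

lemma IsKAdjGen.toRight [Fintype W] {H : SimpleGraph W} {k : ℕ} {S : Finset (Unit ⊕ W)}
    (hS : IsKAdjGen (K1join H) k S) : IsKAdjGen H k S.toRight := by
  intro x y hxy
  have hsub : S.filter (fun z => d2 (K1join H) (.inr x) z ≠ d2 (K1join H) (.inr y) z) ⊆
      (S.toRight.filter (fun w => d2 H x w ≠ d2 H y w)).map .inr := by
    rintro (u | w) hz <;> simp_all [d2_K1join_inr_inl, d2_K1join_inr_inr]
  calc k ≤ _ := hS _ _ (Sum.inr_injective.ne hxy)
    _ ≤ _ := card_le_card hsub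
    _ = _ := card_map _

theorem adim_K1join_ge_general [Fintype W] (H : SimpleGraph W)
    (k : ℕ) (hk2 : k ≤ Cmin (K1join H)) :
    adim H k ≤ adim (K1join H) k := by
  obtain ⟨B, hB, hBcard⟩ := exists_isKAdjBasis (isKAdjGen_univ_of_le_Cmin hk2)
  calc adim H k ≤ B.toRight.card := adim_le_card hB.toRight
    _ ≤ B.card := card_toRight_le
    _ = adim (K1join H) k := hBcard

/-- Proposition 4.2: for a graph `H` of order `n ≥ 2` and
`1 ≤ k ≤ C(K₁ + H)`, `adim_k(K₁ + H) ≥ adim_k(H)`. -/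
theorem adim_K1join_ge [Fintype W] (H : SimpleGraph W) (h : 2 ≤ Fintype.card W)
    (k : ℕ) (hk1 : 1 ≤ k) (hk2 : k ≤ Cmin (K1join H)) :
    adim H k ≤ adim (K1join H) k :=
  adim_K1join_ge_general H k hk2

end
end AdjDim
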